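/- Let (T,o) be a finite semi-k-ary rooted tree with m = |V_k(T)|, and let Y_n be a k-element subset of {1,…,n}. Let Ind(T,o; L_{n,k}, Y_n) be the set of injective maps φ : V(T) → V(L_{n,k}) with φ(o) = Y_n such that for all u, v ∈ V(T), u and v are adjacent in T if and only if φ(u) and φ(v) are adjacent in L_{n,k}. Then (k!)^m · ∏_{j=0}^{m−1} (n − k − j) ≤ |Ind(T,o; L_{n,k}, Y_n)| ≤ (k!)^m · n^m. -/

import Mathlib

/-- The bipartite graph `L_{n,k}`. -/
def Lgraph (n k : ℕ) : SimpleGraph (Finset (Fin n)) where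
  Adj A B := (A.card = k ∧ B.card = k + 1 ∧ A ⊆ B) ∨ (B.card = k ∧ A.card = k + 1 ∧ B ⊆ A)
  symm := by
    constructor
    intro A B h
    tauto
  loopless := by
    constructor
    intro A h
    rcases h with ⟨h1, h2, -⟩ | ⟨h1, h2, -⟩ <;> omega

/-!
An induced embedding `φ` of `(T, o)` into `L_{n,k}` is forced level by level. Adjacency to the
parent makes `φ v` a `(k+1)`-set `φ (parent v) ∪ {x v}` at odd depth and a `k`-set
`φ (parent v) \ {d v}` at even depth. Injectivity forces `d v ≠ x (parent v)`, and distinct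
children of one odd vertex to drop distinct elements of the `k`-set `φ v \ {x v}`. Recording
the new elements `x v` (at most `n` choices each) and, for every odd vertex, the bijection from
its `k` children to the elements they drop (`k!` choices) determines `φ`: this is the upper
bound.

Conversely, pairwise distinct new elements outside `Y_n` (`∏ j < m, (n - k - j)` choices) and
arbitrary bijections build a map `treeMap` level by level. A new element `x w` only occurs in the
images of descendants of `w`. This depth bound makes `treeMap` injective and makes it reflect
adjacency, and the choices can be read back off the map: this is the lower bound.
-/

namespace Finset

variable {α : Type*} [Inhabited α] {s : Finset α} {i : ℕ}

noncomputable def nthElem (s : Finset α) (i : ℕ) : α :=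
  s.toList.getD i default

lemma nthElem_mem (h : i < s.card) : s.nthElem i ∈ s := by
  rw [nthElem, List.getD_eq_getElem _ _ (by simpa using h)]
  exact mem_toList.mp (List.getElem_mem _)

lemma nthElem_injOn : Set.InjOn s.nthElem (Set.Iio s.card) := fun i hi j hj h => by
  rw [nthElem, nthElem, List.getD_eq_getElem _ _ (by simpa using hi),
    List.getD_eq_getElem _ _ (by simpa using hj)] at h
  exact s.nodup_toList.getElem_inj_iff.mp h

lemma exists_nthElem_eq {a : α} (ha : a ∈ s) : ∃ i < s.card, s.nthElem i = a := by
  obtain ⟨i, hi, rfl⟩ := List.getElem_of_mem (mem_toList.mpr ha)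
  exact ⟨i, by simpa using hi, List.getD_eq_getElem _ _ hi⟩

lemma eq_of_erase_nthElem_erase_eq [DecidableEq α] {a : α} {j : ℕ} (hi : i < (s.erase a).card)
    (hj : j < (s.erase a).card)
    (h : s.erase ((s.erase a).nthElem i) = s.erase ((s.erase a).nthElem j)) : i = j :=
  nthElem_injOn hi hj <| s.erase_injOn (mem_of_mem_erase (nthElem_mem hi))
    (mem_of_mem_erase (nthElem_mem hj)) h

end Finset

lemma Set.natCard_pi_of_card_eq {V : Type*} {s : Set V} [Finite s] {β : s → Type*} {c : ℕ}
    (h : ∀ v, Nat.card (β v) = c) : Nat.card (∀ v, β v) = c ^ s.ncard := by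
  have := Fintype.ofFinite s
  rw [Nat.card_pi, Finset.prod_congr rfl fun v _ => h v, Finset.prod_const, Finset.card_univ,
    ← Nat.card_eq_fintype_card, Nat.card_coe_set_eq]

lemma natCard_embedding_compl {β : Type*} [Finite β] {n : ℕ} (Y : Finset (Fin n)) :
    Nat.card (β ↪ {a : Fin n // a ∉ Y}) = (n - Y.card).descFactorial (Nat.card β) := by
  classical
  have := Fintype.ofFinite β
  rw [Nat.card_eq_fintype_card, Fintype.card_embedding_eq, Fintype.card_subtype_compl,
    Fintype.card_coe, Fintype.card_fin, Nat.card_eq_fintype_card]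

namespace SimpleGraph

variable {V : Type*} {T : SimpleGraph V} {o v w : V} {k : ℕ} {b : V → ℕ}

open Classical in
noncomputable def parent (T : SimpleGraph V) (o v : V) : V :=
  if h : ∃ w, T.Adj v w ∧ T.dist o w + 1 = T.dist o v then h.choose else v

def children (T : SimpleGraph V) (o v : V) : Set V :=
  {w | w ≠ o ∧ T.parent o w = v}

/-- `V_k(T)`. -/
def oddVerts (T : SimpleGraph V) (o : V) : Set V :=
  {v | Odd (T.dist o v)}

lemma ne_of_odd_dist (hv : Odd (T.dist o v)) : v ≠ o := by
  rintro rfl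
  simp at hv

lemma Connected.exists_adj_dist_add_one (hT : T.Connected) (hv : v ≠ o) :
    ∃ w, T.Adj v w ∧ T.dist o w + 1 = T.dist o v := by
  obtain ⟨p, hp⟩ := hT.exists_walk_length_eq_dist v o
  have hnil : ¬ p.Nil := Walk.not_nil_of_ne hv
  refine ⟨p.snd, p.adj_snd hnil, ?_⟩
  have htail : T.dist p.snd o ≤ p.tail.length := dist_le _
  have htri : T.dist v o ≤ T.dist v p.snd + T.dist p.snd o := hT.dist_triangle
  rw [dist_eq_one_iff_adj.mpr (p.adj_snd hnil)] at htri
  have := p.length_tail_add_one hnil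
  rw [dist_comm (u := o), dist_comm (u := o)]
  omega

lemma Connected.adj_parent (hT : T.Connected) (hv : v ≠ o) : T.Adj v (T.parent o v) := by
  have h := hT.exists_adj_dist_add_one hv
  rw [parent, dif_pos h]
  exact h.choose_spec.1

lemma Connected.dist_parent_add_one (hT : T.Connected) (hv : v ≠ o) :
    T.dist o (T.parent o v) + 1 = T.dist o v := by
  have h := hT.exists_adj_dist_add_one hv
  rw [parent, dif_pos h]
  exact h.choose_spec.2

lemma Connected.odd_dist_parent_iff (hT : T.Connected) (hv : v ≠ o) :
    Odd (T.dist o (T.parent o v)) ↔ ¬ Odd (T.dist o v) := by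
  rw [← hT.dist_parent_add_one hv, Nat.odd_add_one, not_not]

theorem Connected.induction_parent (hT : T.Connected) {P : V → Prop} (root : P o)
    (step : ∀ v, v ≠ o → P (T.parent o v) → P v) (v : V) : P v := by
  induction hd : T.dist o v using Nat.strong_induction_on generalizing v with
  | _ d ih =>
    by_cases hv : v = o
    · exact hv ▸ root
    · exact step v hv (ih _ (hd ▸ hT.dist_parent_add_one hv ▸ Nat.lt_succ_self _) _ rfl)

lemma IsTree.eq_of_adj_of_dist_add_one (hT : T.IsTree) {w' : V} (h : T.Adj v w)
    (h' : T.Adj v w') (hd : T.dist o w + 1 = T.dist o v) (hd' : T.dist o w' + 1 = T.dist o v) :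
    w = w' := by
  obtain ⟨q, hq⟩ := hT.connected.exists_walk_length_eq_dist w o
  obtain ⟨q', hq'⟩ := hT.connected.exists_walk_length_eq_dist w' o
  have hpath : ∀ {u} (a : T.Adj v u) (r : T.Walk u o), r.length = T.dist u o →
      T.dist o u + 1 = T.dist o v → (Walk.cons a r).IsPath := fun a r hr hdu =>
    Walk.isPath_of_length_eq_dist _ (by rw [Walk.length_cons, hr, dist_comm, hdu, dist_comm])
  have := (hT.existsUnique_path v o).unique (hpath h q hq hd) (hpath h' q' hq' hd')
  simpa using congrArg Walk.snd this

lemma IsTree.parent_eq_of_adj (hT : T.IsTree) (h : T.Adj v w)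
    (hd : T.dist o w + 1 = T.dist o v) : T.parent o v = w := by
  have hv : v ≠ o := by rintro rfl; simp at hd
  exact hT.eq_of_adj_of_dist_add_one (hT.connected.adj_parent hv) h
    (hT.connected.dist_parent_add_one hv) hd

lemma IsTree.adj_iff_parent_eq (hT : T.IsTree) {u : V} :
    T.Adj u v ↔ (v ≠ o ∧ T.parent o v = u) ∨ (u ≠ o ∧ T.parent o u = v) := by
  constructor
  · intro h
    rcases hT.dist_eq_dist_add_one_of_adj o h with hd | hd
    · exact .inr ⟨by rintro rfl; simp at hd, hT.parent_eq_of_adj h hd.symm⟩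
    · exact .inl ⟨by rintro rfl; simp at hd, hT.parent_eq_of_adj h.symm hd.symm⟩
  · rintro (⟨hv, rfl⟩ | ⟨hu, rfl⟩)
    · exact (hT.connected.adj_parent hv).symm
    · exact hT.connected.adj_parent hu

lemma IsTree.ncard_children_add_one [Finite V] (hT : T.IsTree) (hv : v ≠ o) :
    (T.children o v).ncard + 1 = (T.neighborSet v).ncard := by
  have hnbr : T.neighborSet v = insert (T.parent o v) (T.children o v) := by
    ext w
    rw [mem_neighborSet, hT.adj_iff_parent_eq (o := o)]
    simp only [children, Set.mem_insert_iff, Set.mem_ofPred_eq, eq_comm (a := w)]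
    tauto
  have hnot : T.parent o v ∉ T.children o v := by
    rintro ⟨hpo, hpp⟩
    have h1 := hT.connected.dist_parent_add_one hv
    have h2 := hT.connected.dist_parent_add_one hpo
    rw [hpp] at h2
    omega
  rw [hnbr, Set.ncard_insert_of_notMem hnot]

section TreeMap

variable {α : Type*} [DecidableEq α] [Inhabited α] {Y : Finset α} {x : V → α}

/-- A vertex at odd depth adds its label `x v` to its parent's set; a vertex at even depth removes
the `b v`-th element of its parent's set other than the parent's label. -/
noncomputable def treeMap (T : SimpleGraph V) (o : V) (Y : Finset α) (x : V → α) (b : V → ℕ)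
    (v : V) : Finset α :=
  if T.dist o (T.parent o v) < T.dist o v then
    let P := T.treeMap o Y x b (T.parent o v)
    if Odd (T.dist o v) then insert (x v) P
    else P.erase ((P.erase (x (T.parent o v))).nthElem (b v))
  else Y
termination_by T.dist o v

lemma treeMap_root : T.treeMap o Y x b o = Y := by
  rw [treeMap, if_neg (by simp)]

lemma Connected.treeMap_of_odd (hT : T.Connected) (hv : Odd (T.dist o v)) :
    T.treeMap o Y x b v = insert (x v) (T.treeMap o Y x b (T.parent o v)) := by
  have hd := hT.dist_parent_add_one (ne_of_odd_dist hv)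
  rw [treeMap, if_pos (by omega), if_pos hv]

lemma Connected.treeMap_of_even (hT : T.Connected) (hv : ¬ Odd (T.dist o v)) (ho : v ≠ o) :
    T.treeMap o Y x b v = (T.treeMap o Y x b (T.parent o v)).erase
      (((T.treeMap o Y x b (T.parent o v)).erase (x (T.parent o v))).nthElem (b v)) := by
  have hd := hT.dist_parent_add_one ho
  rw [treeMap, if_pos (by omega), if_neg hv]

lemma Connected.eq_or_dist_lt_of_mem_treeMap (hT : T.Connected) (hx : Set.InjOn x (T.oddVerts o))
    (hxY : ∀ v ∈ T.oddVerts o, x v ∉ Y) (hw : Odd (T.dist o w)) (v : V)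
    (hmem : x w ∈ T.treeMap o Y x b v) : w = v ∨ T.dist o w < T.dist o v := by
  induction v using hT.induction_parent (o := o) with
  | root => rw [treeMap_root] at hmem; exact absurd hmem (hxY w hw)
  | step v hvo ih =>
    have hd := hT.dist_parent_add_one hvo
    have hpar : x w ∈ T.treeMap o Y x b (T.parent o v) → T.dist o w < T.dist o v := fun h => by
      rcases ih h with h | h
      · rw [h]; omega
      · omega
    by_cases hv : Odd (T.dist o v)
    · rw [hT.treeMap_of_odd hv, Finset.mem_insert] at hmem
      rcases hmem with h | h
      · exact .inl (hx hw hv h)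
      · exact .inr (hpar h)
    · rw [hT.treeMap_of_even hv hvo] at hmem
      exact .inr (hpar (Finset.mem_of_mem_erase hmem))

lemma Connected.apply_notMem_treeMap_parent (hT : T.Connected) (hx : Set.InjOn x (T.oddVerts o))
    (hxY : ∀ v ∈ T.oddVerts o, x v ∉ Y) (hv : Odd (T.dist o v)) :
    x v ∉ T.treeMap o Y x b (T.parent o v) := by
  intro hmem
  have hd := hT.dist_parent_add_one (ne_of_odd_dist hv)
  rcases hT.eq_or_dist_lt_of_mem_treeMap hx hxY hv _ hmem with h | h
  · rw [← h] at hd; omega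
  · omega

lemma Connected.apply_mem_treeMap (hT : T.Connected) (hv : Odd (T.dist o v)) :
    x v ∈ T.treeMap o Y x b v := by
  rw [hT.treeMap_of_odd hv]
  exact Finset.mem_insert_self _ _

lemma Connected.card_treeMap (hT : T.Connected) (hY : Y.card = k)
    (hx : Set.InjOn x (T.oddVerts o)) (hxY : ∀ v ∈ T.oddVerts o, x v ∉ Y)
    (hbk : ∀ v ∈ T.oddVerts o, ∀ c ∈ T.children o v, b c < k) (v : V) :
    (T.treeMap o Y x b v).card = if Odd (T.dist o v) then k + 1 else k := by
  induction v using hT.induction_parent (o := o) with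
  | root => simp [treeMap_root, hY]
  | step v ho ih =>
    have hpar := hT.odd_dist_parent_iff ho
    by_cases hv : Odd (T.dist o v)
    · rw [hT.treeMap_of_odd hv,
        Finset.card_insert_of_notMem (hT.apply_notMem_treeMap_parent hx hxY hv), ih,
        if_neg (by tauto), if_pos hv]
    · rw [if_pos (hpar.mpr hv)] at ih
      have hxP := hT.apply_mem_treeMap (Y := Y) (x := x) (b := b) (hpar.mpr hv)
      have hdrop := Finset.nthElem_mem (s := (T.treeMap o Y x b (T.parent o v)).erase _)
        (i := b v)
        (by rw [Finset.card_erase_of_mem hxP, ih]; exact hbk _ (hpar.mpr hv) v ⟨ho, rfl⟩)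
      rw [hT.treeMap_of_even hv ho, Finset.card_erase_of_mem (Finset.mem_of_mem_erase hdrop), ih,
        if_neg hv, Nat.add_sub_cancel]

lemma Connected.card_treeMap_erase (hT : T.Connected) (hY : Y.card = k)
    (hx : Set.InjOn x (T.oddVerts o)) (hxY : ∀ v ∈ T.oddVerts o, x v ∉ Y)
    (hbk : ∀ v ∈ T.oddVerts o, ∀ c ∈ T.children o v, b c < k) (hv : Odd (T.dist o v)) :
    ((T.treeMap o Y x b v).erase (x v)).card = k := by
  rw [Finset.card_erase_of_mem (hT.apply_mem_treeMap hv), hT.card_treeMap hY hx hxY hbk, if_pos hv,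
    Nat.add_sub_cancel]

lemma Connected.apply_parent_mem_treeMap (hT : T.Connected) (hY : Y.card = k)
    (hx : Set.InjOn x (T.oddVerts o)) (hxY : ∀ v ∈ T.oddVerts o, x v ∉ Y)
    (hbk : ∀ v ∈ T.oddVerts o, ∀ c ∈ T.children o v, b c < k)
    (hv : ¬ Odd (T.dist o v)) (ho : v ≠ o) :
    x (T.parent o v) ∈ T.treeMap o Y x b v := by
  have hpar := (hT.odd_dist_parent_iff ho).mpr hv
  have hdrop := Finset.nthElem_mem (i := b v)
    ((hT.card_treeMap_erase hY hx hxY hbk hpar).symm ▸ hbk _ hpar v ⟨ho, rfl⟩)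
  rw [hT.treeMap_of_even hv ho]
  exact Finset.mem_erase.mpr ⟨(Finset.ne_of_mem_erase hdrop).symm, hT.apply_mem_treeMap hpar⟩

lemma Connected.treeMap_ne_of_even (hT : T.Connected) (hY : Y.card = k)
    (hx : Set.InjOn x (T.oddVerts o)) (hxY : ∀ v ∈ T.oddVerts o, x v ∉ Y)
    (hbk : ∀ v ∈ T.oddVerts o, ∀ c ∈ T.children o v, b c < k)
    (hv : ¬ Odd (T.dist o v)) (ho : v ≠ o) : T.treeMap o Y x b v ≠ Y := fun hvY =>
  hxY _ ((hT.odd_dist_parent_iff ho).mpr hv)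
    (hvY ▸ hT.apply_parent_mem_treeMap hY hx hxY hbk hv ho)

lemma Connected.eq_of_treeMap_eq_of_even (hT : T.Connected) (hY : Y.card = k)
    (hx : Set.InjOn x (T.oddVerts o)) (hxY : ∀ v ∈ T.oddVerts o, x v ∉ Y)
    (hbk : ∀ v ∈ T.oddVerts o, ∀ c ∈ T.children o v, b c < k)
    (hb : ∀ v ∈ T.oddVerts o, Set.InjOn b (T.children o v)) {u : V}
    (hu : ¬ Odd (T.dist o u)) (hw : ¬ Odd (T.dist o w))
    (h : T.treeMap o Y x b u = T.treeMap o Y x b w) : u = w := by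
  by_cases huo : u = o
  · rw [huo, treeMap_root] at h
    by_contra hwo
    exact hT.treeMap_ne_of_even hY hx hxY hbk hw (fun hw' => hwo (huo.trans hw'.symm)) h.symm
  by_cases hwo : w = o
  · rw [hwo, treeMap_root] at h
    exact absurd h (hT.treeMap_ne_of_even hY hx hxY hbk hu huo)
  have hpu := (hT.odd_dist_parent_iff huo).mpr hu
  have hpw := (hT.odd_dist_parent_iff hwo).mpr hw
  have hdu := hT.dist_parent_add_one huo
  have hdw := hT.dist_parent_add_one hwo
  -- the new label of each parent lies in the common image, which forces equal depths
  have hxu : x (T.parent o u) ∈ T.treeMap o Y x b w :=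
    h ▸ hT.apply_parent_mem_treeMap hY hx hxY hbk hu huo
  have hxw : x (T.parent o w) ∈ T.treeMap o Y x b u :=
    h ▸ hT.apply_parent_mem_treeMap hY hx hxY hbk hw hwo
  have hd : T.dist o u = T.dist o w := by
    rcases hT.eq_or_dist_lt_of_mem_treeMap hx hxY hpu w hxu with h1 | h1
    · exact absurd (h1 ▸ hpu) hw
    rcases hT.eq_or_dist_lt_of_mem_treeMap hx hxY hpw u hxw with h2 | h2
    · exact absurd (h2 ▸ hpw) hu
    omega
  have hp : T.parent o u = T.parent o w := by
    rw [hT.treeMap_of_even hw hwo] at hxu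
    rcases hT.eq_or_dist_lt_of_mem_treeMap hx hxY hpu _ (Finset.mem_of_mem_erase hxu) with h1 | h1
    · exact h1
    · omega
  have hcard := hT.card_treeMap_erase hY hx hxY hbk hpw
  rw [hT.treeMap_of_even hu huo, hT.treeMap_of_even hw hwo, hp] at h
  refine hb _ hpw ⟨huo, hp⟩ ⟨hwo, rfl⟩ (Finset.eq_of_erase_nthElem_erase_eq ?_ ?_ h)
  · exact hcard ▸ hbk _ hpw u ⟨huo, hp⟩
  · exact hcard ▸ hbk _ hpw w ⟨hwo, rfl⟩

lemma Connected.treeMap_injective (hT : T.Connected) (hY : Y.card = k)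
    (hx : Set.InjOn x (T.oddVerts o)) (hxY : ∀ v ∈ T.oddVerts o, x v ∉ Y)
    (hbk : ∀ v ∈ T.oddVerts o, ∀ c ∈ T.children o v, b c < k)
    (hb : ∀ v ∈ T.oddVerts o, Set.InjOn b (T.children o v)) :
    Function.Injective (T.treeMap o Y x b) := by
  intro u w h
  have hcard := hT.card_treeMap hY hx hxY hbk
  have hcu := hcard u
  rw [h, hcard w] at hcu
  by_cases hu : Odd (T.dist o u)
  · have hw : Odd (T.dist o w) := by by_contra hw; simp [hu, hw] at hcu
    rcases hT.eq_or_dist_lt_of_mem_treeMap hx hxY hu w (h ▸ hT.apply_mem_treeMap hu) with h1 | h1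
    · exact h1
    rcases hT.eq_or_dist_lt_of_mem_treeMap hx hxY hw u (h ▸ hT.apply_mem_treeMap hw) with h2 | h2
    · exact h2.symm
    omega
  · have hw : ¬ Odd (T.dist o w) := by intro hw; simp [hu, hw] at hcu
    exact hT.eq_of_treeMap_eq_of_even hY hx hxY hbk hb hu hw h

lemma Connected.eqOn_of_treeMap_eq (hT : T.Connected) (hY : Y.card = k)
    (hx : Set.InjOn x (T.oddVerts o)) (hxY : ∀ v ∈ T.oddVerts o, x v ∉ Y)
    (hbk : ∀ v ∈ T.oddVerts o, ∀ c ∈ T.children o v, b c < k) {x' : V → α} {b' : V → ℕ}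
    (hbk' : ∀ v ∈ T.oddVerts o, ∀ c ∈ T.children o v, b' c < k)
    (h : T.treeMap o Y x b = T.treeMap o Y x' b') :
    Set.EqOn x x' (T.oddVerts o) ∧ ∀ v ∈ T.oddVerts o, Set.EqOn b b' (T.children o v) := by
  have hxeq : Set.EqOn x x' (T.oddVerts o) := by
    intro v hv
    have hmem := hT.apply_mem_treeMap (Y := Y) (x := x) (b := b) hv
    rw [h, hT.treeMap_of_odd hv, ← h, Finset.mem_insert] at hmem
    exact hmem.resolve_right (hT.apply_notMem_treeMap_parent hx hxY hv)
  refine ⟨hxeq, fun v hv c hc => ?_⟩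
  obtain ⟨hco, rfl⟩ := hc
  have hce : ¬ Odd (T.dist o c) := (hT.odd_dist_parent_iff hco).mp hv
  have hcard := hT.card_treeMap_erase hY hx hxY hbk hv
  have hmap := congrFun h c
  rw [hT.treeMap_of_even hce hco, hT.treeMap_of_even hce hco, ← h, ← hxeq hv] at hmap
  exact Finset.eq_of_erase_nthElem_erase_eq (hcard ▸ hbk _ hv c ⟨hco, rfl⟩)
    (hcard ▸ hbk' _ hv c ⟨hco, rfl⟩) hmap

end TreeMap

section Lgraph

variable {n : ℕ} [NeZero n] {Y : Finset (Fin n)} {x : V → Fin n}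

lemma Connected.lgraph_adj_treeMap_parent (hT : T.Connected) (hY : Y.card = k)
    (hx : Set.InjOn x (T.oddVerts o)) (hxY : ∀ v ∈ T.oddVerts o, x v ∉ Y)
    (hbk : ∀ v ∈ T.oddVerts o, ∀ c ∈ T.children o v, b c < k) (ho : v ≠ o) :
    (Lgraph n k).Adj (T.treeMap o Y x b (T.parent o v)) (T.treeMap o Y x b v) := by
  have hcard := hT.card_treeMap hY hx hxY hbk
  have hpar := hT.odd_dist_parent_iff ho
  by_cases hv : Odd (T.dist o v)
  · refine .inl ⟨?_, ?_, ?_⟩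
    · rw [hcard, if_neg (by tauto)]
    · rw [hcard, if_pos hv]
    · rw [hT.treeMap_of_odd hv]
      exact Finset.subset_insert _ _
  · refine .inr ⟨?_, ?_, ?_⟩
    · rw [hcard, if_neg hv]
    · rw [hcard, if_pos (hpar.mpr hv)]
    · rw [hT.treeMap_of_even hv ho]
      exact Finset.erase_subset _ _

lemma Connected.adj_of_treeMap_subset (hT : T.Connected) (hY : Y.card = k)
    (hx : Set.InjOn x (T.oddVerts o)) (hxY : ∀ v ∈ T.oddVerts o, x v ∉ Y)
    (hbk : ∀ v ∈ T.oddVerts o, ∀ c ∈ T.children o v, b c < k)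
    (hb : ∀ v ∈ T.oddVerts o, Set.InjOn b (T.children o v)) {a c : V}
    (ha : (T.treeMap o Y x b a).card = k) (hc : (T.treeMap o Y x b c).card = k + 1)
    (hsub : T.treeMap o Y x b a ⊆ T.treeMap o Y x b c) : T.Adj a c := by
  have hcard := hT.card_treeMap hY hx hxY hbk
  have ha' : ¬ Odd (T.dist o a) := fun h => by rw [hcard, if_pos h] at ha; omega
  have hc' : Odd (T.dist o c) := by_contra fun h => by rw [hcard, if_neg h] at hc; omega
  have hco := ne_of_odd_dist hc'
  have hdc := hT.dist_parent_add_one hco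
  by_cases hxc : x c ∈ T.treeMap o Y x b a
  · -- `c` is then a proper ancestor of `a`, and the label of `a`'s parent shows it is the parent
    have hlt : T.dist o c < T.dist o a :=
      (hT.eq_or_dist_lt_of_mem_treeMap hx hxY hc' a hxc).resolve_left fun h => ha' (h ▸ hc')
    have hao : a ≠ o := by rintro rfl; simp at hlt
    have hpa := (hT.odd_dist_parent_iff hao).mpr ha'
    have hda := hT.dist_parent_add_one hao
    have hxa := hsub (hT.apply_parent_mem_treeMap hY hx hxY hbk ha' hao)
    rw [hT.treeMap_of_odd hc', Finset.mem_insert] at hxa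
    rcases hxa with h | h
    · rw [← hx hpa hc' h]
      exact hT.adj_parent hao
    · rcases hT.eq_or_dist_lt_of_mem_treeMap hx hxY hpa _ h with h' | h'
      · rw [h'] at hda; omega
      · omega
  · have hsub' : T.treeMap o Y x b a ⊆ T.treeMap o Y x b (T.parent o c) := fun y hy => by
      have hyc := hsub hy
      rw [hT.treeMap_of_odd hc', Finset.mem_insert] at hyc
      exact hyc.resolve_left fun h => hxc (h ▸ hy)
    have heq := Finset.eq_of_subset_of_card_le hsub' (by
      rw [ha, hcard, if_neg fun h => (hT.odd_dist_parent_iff hco).mp h hc'])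
    rw [hT.treeMap_injective hY hx hxY hbk hb heq]
    exact (hT.adj_parent hco).symm

lemma IsTree.adj_iff_lgraph_adj_treeMap (hT : T.IsTree) (hY : Y.card = k)
    (hx : Set.InjOn x (T.oddVerts o)) (hxY : ∀ v ∈ T.oddVerts o, x v ∉ Y)
    (hbk : ∀ v ∈ T.oddVerts o, ∀ c ∈ T.children o v, b c < k)
    (hb : ∀ v ∈ T.oddVerts o, Set.InjOn b (T.children o v)) {u : V} :
    T.Adj u v ↔ (Lgraph n k).Adj (T.treeMap o Y x b u) (T.treeMap o Y x b v) := by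
  constructor
  · rw [hT.adj_iff_parent_eq (o := o)]
    rintro (⟨hv, rfl⟩ | ⟨hu, rfl⟩)
    · exact hT.connected.lgraph_adj_treeMap_parent hY hx hxY hbk hv
    · exact (hT.connected.lgraph_adj_treeMap_parent hY hx hxY hbk hu).symm
  · rintro (⟨h1, h2, h3⟩ | ⟨h1, h2, h3⟩)
    · exact hT.connected.adj_of_treeMap_subset hY hx hxY hbk hb h1 h2 h3
    · exact (hT.connected.adj_of_treeMap_subset hY hx hxY hbk hb h1 h2 h3).symm

end Lgraph

section Counting

lemma IsTree.card_children [Finite V] (hT : T.IsTree)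
    (hsemi : ∀ v : V, Odd (T.dist o v) → Set.ncard {w : V | T.Adj v w} = k + 1)
    (hv : Odd (T.dist o v)) : Nat.card (T.children o v) = k := by
  have h := hT.ncard_children_add_one (ne_of_odd_dist hv)
  rw [← Nat.card_coe_set_eq] at h
  exact Nat.add_right_cancel (h.trans (hsemi v hv))

lemma IsTree.card_pi_equiv_children [Finite V] (hT : T.IsTree)
    (hsemi : ∀ v : V, Odd (T.dist o v) → Set.ncard {w : V | T.Adj v w} = k + 1) :
    Nat.card (∀ v : T.oddVerts o, T.children o v ≃ Fin k) =
      k.factorial ^ (T.oddVerts o).ncard :=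
  Set.natCard_pi_of_card_eq fun v => by
    rw [Nat.card_congr ((Finite.equivFinOfCardEq (hT.card_children hsemi v.2)).equivCongr
      (Equiv.refl _)), Nat.card_perm, Nat.card_fin]

lemma IsTree.card_pi_embedding_children [Finite V] (hT : T.IsTree)
    (hsemi : ∀ v : V, Odd (T.dist o v) → Set.ncard {w : V | T.Adj v w} = k + 1) :
    Nat.card (∀ v : T.oddVerts o, T.children o v ↪ Fin k) =
      k.factorial ^ (T.oddVerts o).ncard :=
  Set.natCard_pi_of_card_eq fun v => by
    rw [Nat.card_congr ((Finite.equivFinOfCardEq (hT.card_children hsemi v.2)).embeddingCongr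
      (Equiv.refl _)), Nat.card_congr (Equiv.embeddingEquivOfFinite _), Nat.card_perm,
      Nat.card_fin]

end Counting

section Extension

variable {α : Type*} [Inhabited α]

open Classical in
noncomputable def oddExtend (x : T.oddVerts o → α) (v : V) : α :=
  if h : Odd (T.dist o v) then x ⟨v, h⟩ else default

open Classical in
noncomputable def childExtend (σ : ∀ v : T.oddVerts o, T.children o v → ℕ) (c : V) : ℕ :=
  if h : c ≠ o ∧ Odd (T.dist o (T.parent o c)) then σ ⟨_, h.2⟩ ⟨c, h.1, rfl⟩ else 0

lemma oddExtend_apply (x : T.oddVerts o → α) (hv : Odd (T.dist o v)) :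
    oddExtend x v = x ⟨v, hv⟩ :=
  dif_pos hv

lemma childExtend_apply (σ : ∀ v : T.oddVerts o, T.children o v → ℕ) (v : T.oddVerts o)
    (c : T.children o v) : childExtend σ c = σ v c := by
  obtain ⟨v, hv⟩ := v
  obtain ⟨c, hco, hcv⟩ := c
  cases hcv
  exact dif_pos ⟨hco, hv⟩

lemma injOn_oddExtend {Y : Finset α} (x : T.oddVerts o ↪ {a // a ∉ Y}) :
    Set.InjOn (oddExtend fun v => (x v : α)) (T.oddVerts o) := fun u hu w hw h => by
  rw [oddExtend_apply _ hu, oddExtend_apply _ hw] at h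
  exact congrArg Subtype.val (x.injective (Subtype.ext h))

lemma oddExtend_notMem {Y : Finset α} (x : T.oddVerts o ↪ {a // a ∉ Y}) :
    ∀ v ∈ T.oddVerts o, oddExtend (fun v => (x v : α)) v ∉ Y := fun v hv => by
  rw [oddExtend_apply _ hv]
  exact (x _).2

lemma childExtend_lt (σ : ∀ v : T.oddVerts o, T.children o v → Fin k) :
    ∀ v ∈ T.oddVerts o, ∀ c ∈ T.children o v, childExtend (fun v c => σ v c) c < k :=
  fun v hv c hc => by
    rw [childExtend_apply _ ⟨v, hv⟩ ⟨c, hc⟩]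
    exact (σ _ _).2

lemma injOn_childExtend (σ : ∀ v : T.oddVerts o, T.children o v ↪ Fin k) :
    ∀ v ∈ T.oddVerts o, Set.InjOn (childExtend fun v c => σ v c) (T.children o v) :=
  fun v hv c hc c' hc' h => by
    rw [childExtend_apply _ ⟨v, hv⟩ ⟨c, hc⟩, childExtend_apply _ ⟨v, hv⟩ ⟨c', hc'⟩] at h
    exact congrArg Subtype.val ((σ _).injective (Fin.ext h))

end Extension

/-- `Ind(T, o; L_{n,k}, Y)`. -/
def inducedEmbeddings (T : SimpleGraph V) (o : V) (n k : ℕ) (Y : Finset (Fin n)) :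
    Set (V → Finset (Fin n)) :=
  {φ | Function.Injective φ ∧ φ o = Y ∧ (∀ v, (φ v).card = k ∨ (φ v).card = k + 1) ∧
    ∀ u v, T.Adj u v ↔ (Lgraph n k).Adj (φ u) (φ v)}

section UpperBound

variable {n : ℕ} {Y : Finset (Fin n)} {φ : V → Finset (Fin n)}

lemma Connected.card_apply_eq_of_hom (hT : T.Connected) (hY : Y.card = k) (hroot : φ o = Y)
    (hφ : ∀ u v, T.Adj u v → (Lgraph n k).Adj (φ u) (φ v)) (v : V) :
    (φ v).card = if Odd (T.dist o v) then k + 1 else k := by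
  induction v using hT.induction_parent (o := o) with
  | root => simp [hroot, hY]
  | step v ho ih =>
    have hpar := hT.odd_dist_parent_iff ho
    have hadj := hφ _ _ (hT.adj_parent ho)
    by_cases hv : Odd (T.dist o v)
    · rw [if_neg (by tauto)] at ih
      rw [if_pos hv]
      rcases hadj with ⟨h1, h2, -⟩ | ⟨h1, h2, -⟩ <;> omega
    · rw [if_pos (hpar.mpr hv)] at ih
      rw [if_neg hv]
      rcases hadj with ⟨h1, h2, -⟩ | ⟨h1, h2, -⟩ <;> omega

lemma Connected.exists_insert_eq_of_odd (hT : T.Connected) (hY : Y.card = k) (hroot : φ o = Y)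
    (hφ : ∀ u v, T.Adj u v → (Lgraph n k).Adj (φ u) (φ v)) (hv : Odd (T.dist o v)) :
    ∃ a ∉ φ (T.parent o v), insert a (φ (T.parent o v)) = φ v := by
  have ho := ne_of_odd_dist hv
  have hcard := hT.card_apply_eq_of_hom hY hroot hφ
  have hpv : ¬ Odd (T.dist o (T.parent o v)) := fun h => (hT.odd_dist_parent_iff ho).mp h hv
  rcases hφ _ _ (hT.adj_parent ho) with ⟨h1, -, -⟩ | ⟨-, -, hsub⟩
  · rw [hcard, if_pos hv] at h1
    omega
  · exact Finset.exists_eq_insert_iff.mpr ⟨hsub, by rw [hcard, hcard, if_pos hv, if_neg hpv]⟩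

lemma Connected.exists_insert_eq_of_even (hT : T.Connected) (hY : Y.card = k) (hroot : φ o = Y)
    (hφ : ∀ u v, T.Adj u v → (Lgraph n k).Adj (φ u) (φ v)) (hv : ¬ Odd (T.dist o v))
    (ho : v ≠ o) : ∃ a ∉ φ v, insert a (φ v) = φ (T.parent o v) := by
  have hcard := hT.card_apply_eq_of_hom hY hroot hφ
  have hpv := (hT.odd_dist_parent_iff ho).mpr hv
  rcases hφ _ _ (hT.adj_parent ho) with ⟨-, -, hsub⟩ | ⟨h1, -, -⟩
  · exact Finset.exists_eq_insert_iff.mpr ⟨hsub, by rw [hcard, hcard, if_pos hpv, if_neg hv]⟩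
  · rw [hcard, if_pos hpv] at h1
    omega

lemma Connected.exists_eq_erase_nthElem [NeZero n] (hT : T.Connected) (hY : Y.card = k)
    (hinj : Function.Injective φ) (hroot : φ o = Y)
    (hφ : ∀ u v, T.Adj u v → (Lgraph n k).Adj (φ u) (φ v)) (hv : ¬ Odd (T.dist o v))
    (ho : v ≠ o) {a : Fin n} (ha : a ∉ φ (T.parent o (T.parent o v)))
    (hins : insert a (φ (T.parent o (T.parent o v))) = φ (T.parent o v)) :
    ∃ i < k, φ v = (φ (T.parent o v)).erase (((φ (T.parent o v)).erase a).nthElem i) := by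
  obtain ⟨d, hd, hins'⟩ := hT.exists_insert_eq_of_even hY hroot hφ hv ho
  have hpv := (hT.odd_dist_parent_iff ho).mpr hv
  have hdv : φ v = (φ (T.parent o v)).erase d := by rw [← hins', Finset.erase_insert hd]
  -- dropping `a` again would send `v` to the image of its grandparent
  have hda : d ≠ a := by
    rintro rfl
    have hgp := congrArg (T.dist o) <| hinj <| hdv.trans
      (by rw [← hins, Finset.erase_insert ha] : _ = φ (T.parent o (T.parent o v)))
    have h1 := hT.dist_parent_add_one ho
    have h2 := hT.dist_parent_add_one (ne_of_odd_dist hpv)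
    omega
  have hcard : ((φ (T.parent o v)).erase a).card = k := by
    rw [Finset.card_erase_of_mem (hins ▸ Finset.mem_insert_self a _),
      hT.card_apply_eq_of_hom hY hroot hφ, if_pos hpv, Nat.add_sub_cancel]
  obtain ⟨i, hi, hid⟩ :=
    Finset.exists_nthElem_eq (Finset.mem_erase.mpr ⟨hda, hins' ▸ Finset.mem_insert_self d _⟩)
  exact ⟨i, hcard ▸ hi, by rw [hid, hdv]⟩

lemma Connected.exists_treeMap_eq [NeZero n] (hT : T.Connected) (hY : Y.card = k)
    (hinj : Function.Injective φ) (hroot : φ o = Y)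
    (hφ : ∀ u v, T.Adj u v → (Lgraph n k).Adj (φ u) (φ v)) :
    ∃ (x : T.oddVerts o → Fin n) (σ : ∀ v : T.oddVerts o, T.children o v ↪ Fin k),
      T.treeMap o Y (oddExtend x) (childExtend fun v c => σ v c) = φ := by
  choose x hx hxφ using fun v : T.oddVerts o => hT.exists_insert_eq_of_odd hY hroot hφ v.2
  have hidx : ∀ (v : T.oddVerts o) (c : T.children o v),
      ∃ i < k, φ c = (φ v).erase (((φ v).erase (x v)).nthElem i) := by
    rintro ⟨v, hv⟩ ⟨c, hco, hcv⟩
    cases hcv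
    exact hT.exists_eq_erase_nthElem hY hinj hroot hφ ((hT.odd_dist_parent_iff hco).mp hv) hco
      (hx ⟨_, hv⟩) (hxφ ⟨_, hv⟩)
  choose σ hσk hσ using hidx
  refine ⟨x, fun v => ⟨fun c => ⟨σ v c, hσk v c⟩, fun c c' h => ?_⟩, ?_⟩
  · have h' : σ v c = σ v c' := congrArg Fin.val h
    exact Subtype.ext (hinj (by rw [hσ, hσ, h']))
  funext v
  induction v using hT.induction_parent (o := o) with
  | root => rw [treeMap_root, hroot]
  | step v ho ih =>
    by_cases hv : Odd (T.dist o v)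
    · rw [hT.treeMap_of_odd hv, ih, oddExtend_apply x hv, hxφ ⟨v, hv⟩]
    · have hpv := (hT.odd_dist_parent_iff ho).mpr hv
      rw [hT.treeMap_of_even hv ho, ih, oddExtend_apply x hpv,
        childExtend_apply _ ⟨_, hpv⟩ ⟨v, ho, rfl⟩]
      exact (hσ _ _).symm

lemma IsTree.card_inducedEmbeddings_le [Finite V] [NeZero n] (hT : T.IsTree) (hY : Y.card = k)
    (hsemi : ∀ v : V, Odd (T.dist o v) → Set.ncard {w : V | T.Adj v w} = k + 1) :
    Nat.card (T.inducedEmbeddings o n k Y) ≤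
      k.factorial ^ (T.oddVerts o).ncard * n ^ (T.oddVerts o).ncard := by
  choose x σ hxσ using fun φ : T.inducedEmbeddings o n k Y =>
    hT.connected.exists_treeMap_eq hY φ.2.1 φ.2.2.1 fun u v => (φ.2.2.2.2 u v).mp
  have hinj : Function.Injective fun φ => (x φ, σ φ) := fun φ ψ h => by
    simp only [Prod.mk.injEq] at h
    exact Subtype.ext (by rw [← hxσ φ, ← hxσ ψ, h.1, h.2])
  calc Nat.card (T.inducedEmbeddings o n k Y)
      ≤ Nat.card ((T.oddVerts o → Fin n) × ∀ v : T.oddVerts o, T.children o v ↪ Fin k) :=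
        Nat.card_le_card_of_injective _ hinj
    _ = _ := by
      rw [Nat.card_prod, Nat.card_fun, Nat.card_fin, Nat.card_coe_set_eq,
        hT.card_pi_embedding_children hsemi, mul_comm]

end UpperBound

section LowerBound

variable {n : ℕ} [NeZero n] {Y : Finset (Fin n)}

lemma IsTree.treeMap_mem_inducedEmbeddings (hT : T.IsTree) {x : V → Fin n} (hY : Y.card = k)
    (hx : Set.InjOn x (T.oddVerts o)) (hxY : ∀ v ∈ T.oddVerts o, x v ∉ Y)
    (hbk : ∀ v ∈ T.oddVerts o, ∀ c ∈ T.children o v, b c < k)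
    (hb : ∀ v ∈ T.oddVerts o, Set.InjOn b (T.children o v)) :
    T.treeMap o Y x b ∈ T.inducedEmbeddings o n k Y := by
  refine ⟨hT.connected.treeMap_injective hY hx hxY hbk hb, treeMap_root, fun v => ?_,
    fun u v => hT.adj_iff_lgraph_adj_treeMap hY hx hxY hbk hb⟩
  rw [hT.connected.card_treeMap hY hx hxY hbk]
  split_ifs <;> simp

lemma IsTree.le_card_inducedEmbeddings [Finite V] (hT : T.IsTree) (hY : Y.card = k)
    (hsemi : ∀ v : V, Odd (T.dist o v) → Set.ncard {w : V | T.Adj v w} = k + 1) :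
    k.factorial ^ (T.oddVerts o).ncard * ∏ j ∈ Finset.range (T.oddVerts o).ncard, (n - k - j)
      ≤ Nat.card (T.inducedEmbeddings o n k Y) := by
  let Code :=
    (T.oddVerts o ↪ {a : Fin n // a ∉ Y}) × ∀ v : T.oddVerts o, T.children o v ≃ Fin k
  have hmem (p : Code) : T.treeMap o Y (oddExtend fun v => p.1 v)
      (childExtend fun v c => p.2 v c) ∈ T.inducedEmbeddings o n k Y :=
    hT.treeMap_mem_inducedEmbeddings hY (injOn_oddExtend p.1)
      (oddExtend_notMem p.1) (childExtend_lt fun v => p.2 v)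
      (injOn_childExtend fun v => (p.2 v).toEmbedding)
  have hF : Function.Injective fun p => (⟨_, hmem p⟩ : T.inducedEmbeddings o n k Y) :=
    fun p q h => by
      obtain ⟨hxe, hbe⟩ := hT.connected.eqOn_of_treeMap_eq hY (injOn_oddExtend p.1)
        (oddExtend_notMem p.1) (childExtend_lt fun v => p.2 v)
        (childExtend_lt fun v => q.2 v) (congrArg Subtype.val h)
      refine Prod.ext (DFunLike.ext _ _ fun v => Subtype.ext ?_)
        (funext fun v => Equiv.ext fun c => Fin.ext ?_)
      · simpa [oddExtend_apply _ v.2] using hxe v.2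
      · simpa [childExtend_apply] using hbe v v.2 c.2
  calc _ = Nat.card Code := by
        rw [Nat.card_prod, natCard_embedding_compl, Nat.card_coe_set_eq, hY,
          Nat.descFactorial_eq_prod_range, hT.card_pi_equiv_children hsemi, mul_comm]
    _ ≤ _ := Nat.card_le_card_of_injective _ hF

end LowerBound

end SimpleGraph

theorem stmt14_general {V : Type*} [Fintype V] (k : ℕ) (hk : 1 ≤ k)
    (T : SimpleGraph V) (o : V) (htree : T.IsTree)
    (hsemi : ∀ v : V, Odd (T.dist o v) → Set.ncard {w : V | T.Adj v w} = k + 1)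
    (n : ℕ) (Yn : Finset (Fin n)) (hYn : Yn.card = k) :
    Nat.factorial k ^ (Set.ncard {v : V | Odd (T.dist o v)}) *
        ∏ j ∈ Finset.range (Set.ncard {v : V | Odd (T.dist o v)}), (n - k - j)
      ≤ Nat.card {φ : V → Finset (Fin n) //
          Function.Injective φ ∧ φ o = Yn ∧
          (∀ v : V, (φ v).card = k ∨ (φ v).card = k + 1) ∧
          ∀ u v : V, T.Adj u v ↔ (Lgraph n k).Adj (φ u) (φ v)} ∧
    Nat.card {φ : V → Finset (Fin n) //
          Function.Injective φ ∧ φ o = Yn ∧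
          (∀ v : V, (φ v).card = k ∨ (φ v).card = k + 1) ∧
          ∀ u v : V, T.Adj u v ↔ (Lgraph n k).Adj (φ u) (φ v)}
      ≤ Nat.factorial k ^ (Set.ncard {v : V | Odd (T.dist o v)}) *
          n ^ (Set.ncard {v : V | Odd (T.dist o v)}) := by
  have : NeZero n := ⟨by have := Yn.card_le_univ; rw [Fintype.card_fin] at this; omega⟩
  exact ⟨htree.le_card_inducedEmbeddings hYn hsemi, htree.card_inducedEmbeddings_le hYn hsemi⟩

/-- Let `(T,o)` be a finite semi-`k`-ary rooted tree with `m = |V_k(T)|`, and let `Y_n` be a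
`k`-element subset of `{1,…,n}`. Then the number of induced homomorphisms from `(T,o)` to
`(L_{n,k}, Y_n)` — injective maps `φ : V(T) → V(L_{n,k})` with `φ(o) = Y_n` preserving both
adjacency and non-adjacency — satisfies
`(k!)^m·∏_{j=0}^{m-1}(n-k-j) ≤ |Ind(T,o; L_{n,k}, Y_n)| ≤ (k!)^m·n^m`. -/
theorem stmt14 {V : Type*} [Fintype V] [DecidableEq V] (k : ℕ) (hk : 1 ≤ k)
    (T : SimpleGraph V) (o : V) (htree : T.IsTree)
    (hsemi : ∀ v : V, Odd (T.dist o v) → Set.ncard {w : V | T.Adj v w} = k + 1)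
    (n : ℕ) (Yn : Finset (Fin n)) (hYn : Yn.card = k) :
    Nat.factorial k ^ (Set.ncard {v : V | Odd (T.dist o v)}) *
        ∏ j ∈ Finset.range (Set.ncard {v : V | Odd (T.dist o v)}), (n - k - j)
      ≤ Nat.card {φ : V → Finset (Fin n) //
          Function.Injective φ ∧ φ o = Yn ∧
          (∀ v : V, (φ v).card = k ∨ (φ v).card = k + 1) ∧
          ∀ u v : V, T.Adj u v ↔ (Lgraph n k).Adj (φ u) (φ v)} ∧
    Nat.card {φ : V → Finset (Fin n) //
          Function.Injective φ ∧ φ o = Yn ∧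
          (∀ v : V, (φ v).card = k ∨ (φ v).card = k + 1) ∧
          ∀ u v : V, T.Adj u v ↔ (Lgraph n k).Adj (φ u) (φ v)}
      ≤ Nat.factorial k ^ (Set.ncard {v : V | Odd (T.dist o v)}) *
          n ^ (Set.ncard {v : V | Odd (T.dist o v)}) :=
  stmt14_general k hk T o htree hsemi n Yn hYn
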